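/- For every element x of Q: x^{(ab)^k} = x^{c̄ d̄} = x^{(ef)^k}, where x^{(ab)^k} denotes k-fold application of the word ab (i.e., of the permutation x ↦ (x ▷ a) ▷ b) and similarly for (ef)^k. -/

import Mathlib

/-!
The relations say that the point symmetries `S_u = ptSym u` satisfy, in `Equiv.Perm Q`
(which composes right to left), `S_a S_e S_d = 1`, `S_f S_d S_b = 1` and
`S_e S_a (S_b S_a)^k S_c = 1`, with `S_a, S_b, S_e` involutions.
The first gives `S_d⁻¹ = S_a S_e`; substituting it into the other two is a computation in the
group: `S_f = S_b S_a S_e`, hence `S_f S_e = S_b S_a`, and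
`(S_b S_a)^k = S_a S_e S_c⁻¹ = S_d⁻¹ S_c⁻¹`.
-/

/-- A quandle as in the paper: a set with operations `▷` and `▷⁻¹` satisfying
axioms A1, A2, A3. -/
class PaperQuandle (Q : Type*) where
  rhd : Q → Q → Q
  rhdInv : Q → Q → Q
  fix : ∀ x : Q, rhd x x = x
  inv_rhd : ∀ x y : Q, rhdInv (rhd x y) y = x
  rhd_inv : ∀ x y : Q, rhd (rhdInv x y) y = x
  self_distrib : ∀ x y z : Q, rhd (rhd x y) z = rhd (rhd x z) (rhd y z)

infixl:65 " ▷ " => PaperQuandle.rhd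
infixl:65 " ▷⁻¹ " => PaperQuandle.rhdInv

/-- The point symmetry at `u`, as a permutation of `Q`: `x ↦ x ▷ u`,
with inverse `x ↦ x ▷⁻¹ u`. -/
def ptSym {Q : Type*} [PaperQuandle Q] (u : Q) : Equiv.Perm Q where
  toFun x := x ▷ u
  invFun x := x ▷⁻¹ u
  left_inv x := PaperQuandle.inv_rhd x u
  right_inv x := PaperQuandle.rhd_inv x u

section Group

variable {G : Type*} [Group G] {α β γ δ ε φ p : G}

theorem mul_eq_mul_of_mul_mul_eq_one (hβ : β⁻¹ = β) (hε : ε⁻¹ = ε)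
    (h₁ : α * ε * δ = 1) (h₂ : φ * δ * β = 1) : φ * ε = β * α := by
  have hφ : φ = β * α * ε := by
    rw [eq_inv_of_mul_eq_one_left (a := φ) (by rwa [← mul_assoc]), mul_inv_rev, hβ,
      inv_eq_of_mul_eq_one_left h₁, mul_assoc]
  rw [hφ, mul_assoc, mul_eq_one_iff_eq_inv.mpr hε.symm, mul_one]

theorem eq_inv_mul_inv_of_mul_mul_eq_one (hα : α⁻¹ = α) (hε : ε⁻¹ = ε)
    (h₁ : α * ε * δ = 1) (h₂ : ε * α * p * γ = 1) : p = δ⁻¹ * γ⁻¹ := by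
  rw [eq_inv_mul_of_mul_eq (eq_inv_of_mul_eq_one_left h₂), mul_inv_rev, hα, hε,
    inv_eq_of_mul_eq_one_left h₁]

end Group

theorem inv_ptSym_eq_self {Q : Type*} [PaperQuandle Q] {u : Q}
    (h : ∀ x : Q, x ▷ u ▷ u = x) : (ptSym u)⁻¹ = ptSym u :=
  inv_eq_of_mul_eq_one_right (Equiv.ext h)

theorem stmt_6
    {Q : Type*} [PaperQuandle Q] (k : ℤ) (a b c d e f : Q)
    (rel_a : ∀ x : Q, x ▷ a ▷ a = x)
    (rel_b : ∀ x : Q, x ▷ b ▷ b = x)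
    (rel_e : ∀ x : Q, x ▷ e ▷ e = x)
    (rel_dea : ∀ x : Q, x ▷ d ▷ e ▷ a = x)
    (rel_bdf : ∀ x : Q, x ▷ b ▷ d ▷ f = x)
    (rel_cke : ∀ x : Q, (((ptSym b * ptSym a) ^ k) (x ▷ c)) ▷ a ▷ e = x) :
    ∀ x : Q, ((ptSym b * ptSym a) ^ k) x = x ▷⁻¹ c ▷⁻¹ d ∧
      ((ptSym b * ptSym a) ^ k) x = ((ptSym f * ptSym e) ^ k) x := by
  have hdea : ptSym a * ptSym e * ptSym d = 1 := Equiv.ext rel_dea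
  have hpow : (ptSym b * ptSym a) ^ k = (ptSym d)⁻¹ * (ptSym c)⁻¹ :=
    eq_inv_mul_inv_of_mul_mul_eq_one (inv_ptSym_eq_self rel_a) (inv_ptSym_eq_self rel_e) hdea
      (Equiv.ext rel_cke)
  have hfe : ptSym f * ptSym e = ptSym b * ptSym a :=
    mul_eq_mul_of_mul_mul_eq_one (inv_ptSym_eq_self rel_b) (inv_ptSym_eq_self rel_e) hdea
      (Equiv.ext rel_bdf)
  intro x
  exact ⟨by rw [hpow]; rfl, by rw [hfe]⟩
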